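/- Let n ≥ 1 and N = 2^n, let G_n = (X_1,…,X_N) be a Gray code of length-n binary strings, let U be an N×N complex unitary matrix, set m = N(N−1)/2, and let μ_1,…,μ_m be complex numbers of modulus 1 with μ_1 ⋯ μ_m = det(U). Then there exist unitary matrices A_1,…,A_m with U = A_1 ⋯ A_m such that each A_i agrees with the identity in every entry outside the 2×2 principal submatrix with row and column indices X_{k_i} and X_{k_i+1} for some k_i ∈ {1,…,N−1}, and det(A_i) = μ_i for every i. -/

import Mathlib

/-!
Reindexed along the enumeration `X`, the factors become two-level unitaries on adjacent indices
`k, k + 1` of `Fin N`. Clear the columns from the last one down: once every column after `t` is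
that of the identity, `t` such factors on `(0, 1), …, (t - 1, t)` carry column `t` to a vector
whose only nonzero entry, at `t`, is a nonnegative real, hence `1` by unitarity. Each factor only
has to annihilate one coordinate of a vector in `ℂ²`, so its determinant can be any prescribed
unit complex number. After `(N - 1) + ⋯ + 1 = N(N - 1)/2` factors what is left is
`diag(u, 1, …, 1)`, and `u = 1` because the prescribed determinants multiply to `det U`.
-/

/-- Two length-`n` binary strings differ in exactly one position. -/
def DiffersInOnePos {n : ℕ} (x y : Fin n → Bool) : Prop :=
  (Finset.univ.filter fun j => x j ≠ y j).card = 1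

/-- `A` agrees with the identity matrix in every entry outside the 2×2 principal
submatrix with row and column indices `p` and `q` (a "two-level" pattern). -/
def IsTwoLevelOn {ι R : Type*} [DecidableEq ι] [Zero R] [One R]
    (A : Matrix ι ι R) (p q : ι) : Prop :=
  ∀ i j, (i ≠ p ∧ i ≠ q) ∨ (j ≠ p ∧ j ≠ q) → A i j = if i = j then 1 else 0

open Matrix

section Unitary

variable {ι R : Type*} [Fintype ι] [DecidableEq ι] [CommRing R] [StarRing R]
  {U : Matrix ι ι R}

theorem Matrix.reindex_mem_unitaryGroup {κ : Type*} [Fintype κ] [DecidableEq κ] (e : ι ≃ κ)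
    (hU : U ∈ unitaryGroup ι R) : reindex e e U ∈ unitaryGroup κ R := by
  rw [mem_unitaryGroup_iff] at hU ⊢
  rw [star_eq_conjTranspose, conjTranspose_reindex, reindex_apply, reindex_apply,
    submatrix_mul_equiv, ← star_eq_conjTranspose, hU, submatrix_one_equiv]

theorem star_mulVec_eq_of_mulVec_eq (hU : U ∈ unitaryGroup ι R) {v : ι → R}
    (h : U *ᵥ v = v) : star U *ᵥ v = v :=
  calc star U *ᵥ v = (star U * U) *ᵥ v := by rw [← mulVec_mulVec, h]
    _ = v := by rw [mem_unitaryGroup_iff'.mp hU, one_mulVec]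

theorem apply_eq_zero_of_mulVec_single (hU : U ∈ unitaryGroup ι R) {k j : ι}
    (hk : U *ᵥ Pi.single k 1 = Pi.single k 1) (hj : j ≠ k) : U k j = 0 := by
  have := congrFun (star_mulVec_eq_of_mulVec_eq hU hk) j
  rw [mulVec_single_one, col_apply, star_apply, Pi.single_eq_of_ne hj] at this
  simpa using congrArg star this

theorem eq_one_of_mulVec_single_of_det_eq_one (hU : U ∈ unitaryGroup ι R) (k : ι)
    (hfix : ∀ j ≠ k, U *ᵥ Pi.single j 1 = Pi.single j 1) (hdet : U.det = 1) : U = 1 := by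
  have hcol : ∀ i, ∀ j ≠ k, U i j = (1 : Matrix ι ι R) i j := fun i j hj => by
    simpa [mulVec_single_one, one_apply, Pi.single_apply, eq_comm] using congrFun (hfix j hj) i
  have hoff : ∀ i j, i ≠ j → U i j = 0 := fun i j hij => by
    by_cases hj : j = k
    · subst hj
      exact apply_eq_zero_of_mulVec_single hU (hfix i hij) hij.symm
    · simpa [one_apply_ne hij] using hcol i j hj
  have hdiag : U = diagonal fun i => U i i := by
    ext i j
    by_cases hij : i = j
    · simp [hij]
    · simp [hij, hoff i j hij]
  have hkk : U k k = 1 := by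
    have hprod : ∏ i, U i i = 1 := by
      rw [← det_diagonal, ← hdiag, hdet]
    rwa [Finset.prod_eq_single k (fun j _ hj => by simpa using hcol j j hj) (by simp)] at hprod
  ext i j
  by_cases hj : j = k
  · by_cases hij : i = j
    · subst hij hj; simpa using hkk
    · simp [hoff i j hij, one_apply_ne hij]
  · exact hcol i j hj

end Unitary

open scoped ComplexOrder

theorem mulVec_single_eq_of_nonneg {ι : Type*} [Fintype ι] [DecidableEq ι]
    {U : Matrix ι ι ℂ} (hU : U ∈ unitaryGroup ι ℂ) {k : ι} (hoff : ∀ i ≠ k, U i k = 0)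
    (hkk : 0 ≤ U k k) : U *ᵥ Pi.single k 1 = Pi.single k 1 := by
  have hnorm : star (U k k) * U k k = 1 := by
    have := congrFun (congrFun (mem_unitaryGroup_iff'.mp hU) k) k
    rwa [mul_apply, Finset.sum_eq_single k (fun i _ hi => by simp [hoff i hi]) (by simp),
      star_apply, one_apply_eq] at this
  have hone : U k k = 1 := by
    rw [Complex.star_def, Complex.conj_mul'] at hnorm
    rw [Complex.eq_coe_norm_of_nonneg hkk,
      (pow_eq_one_iff_of_nonneg (norm_nonneg _) two_ne_zero).mp (by exact_mod_cast hnorm),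
      Complex.ofReal_one]
  ext i
  rw [mulVec_single_one, col_apply]
  by_cases hi : i = k
  · subst hi; simp [hone]
  · simp [hoff i hi, hi]

section TwoLevel

variable {ι R : Type*} [DecidableEq ι] {p q : ι}

def pairSumCompl (hpq : p ≠ q) : Fin 2 ⊕ {i : ι // i ≠ p ∧ i ≠ q} ≃ ι where
  toFun := Sum.elim ![p, q] Subtype.val
  invFun i := if h₁ : i = p then .inl 0 else if h₂ : i = q then .inl 1 else .inr ⟨i, h₁, h₂⟩
  left_inv x := by
    rcases x with j | ⟨i, h₁, h₂⟩
    · fin_cases j <;> simp [hpq.symm]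
    · simp [h₁, h₂]
  right_inv i := by
    by_cases h₁ : i = p
    · simp [h₁]
    · by_cases h₂ : i = q <;> simp [h₁, h₂, hpq.symm]

@[simp] theorem pairSumCompl_symm_left (hpq : p ≠ q) : (pairSumCompl hpq).symm p = .inl 0 :=
  (pairSumCompl hpq).symm_apply_eq.mpr rfl

@[simp] theorem pairSumCompl_symm_right (hpq : p ≠ q) : (pairSumCompl hpq).symm q = .inl 1 :=
  (pairSumCompl hpq).symm_apply_eq.mpr rfl

def twoLevel [Zero R] [One R] (hpq : p ≠ q) (B : Matrix (Fin 2) (Fin 2) R) : Matrix ι ι R :=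
  reindex (pairSumCompl hpq) (pairSumCompl hpq) (fromBlocks B 0 0 1)

theorem isTwoLevelOn_twoLevel [Zero R] [One R] (hpq : p ≠ q) (B : Matrix (Fin 2) (Fin 2) R) :
    IsTwoLevelOn (twoLevel hpq B) p q := by
  intro i j hij
  obtain ⟨x, rfl⟩ := (pairSumCompl hpq).surjective i
  obtain ⟨y, rfl⟩ := (pairSumCompl hpq).surjective j
  simp only [twoLevel, reindex_apply, submatrix_apply, Equiv.symm_apply_apply,
    (pairSumCompl hpq).apply_eq_iff_eq]
  rcases x with x | x <;> rcases y with y | y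
  · fin_cases x <;> fin_cases y <;> simp_all [pairSumCompl]
  all_goals simp [one_apply]

theorem twoLevel_one [Semiring R] (hpq : p ≠ q) :
    twoLevel hpq (1 : Matrix (Fin 2) (Fin 2) R) = 1 := by
  simp [twoLevel, fromBlocks_one]

theorem star_twoLevel [Semiring R] [StarRing R] (hpq : p ≠ q) (B : Matrix (Fin 2) (Fin 2) R) :
    star (twoLevel hpq B) = twoLevel hpq (star B) := by
  simp [twoLevel, star_eq_conjTranspose, fromBlocks_conjTranspose]

variable [Fintype ι]

theorem twoLevel_mul [Semiring R] (hpq : p ≠ q) (B C : Matrix (Fin 2) (Fin 2) R) :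
    twoLevel hpq B * twoLevel hpq C = twoLevel hpq (B * C) := by
  simp [twoLevel, reindex_apply, submatrix_mul_equiv, fromBlocks_multiply]

theorem twoLevel_mem_unitaryGroup [CommRing R] [StarRing R] (hpq : p ≠ q)
    {B : Matrix (Fin 2) (Fin 2) R} (hB : B ∈ unitaryGroup (Fin 2) R) :
    twoLevel hpq B ∈ unitaryGroup ι R := by
  rw [mem_unitaryGroup_iff] at hB ⊢
  rw [star_twoLevel, twoLevel_mul, hB, twoLevel_one]

theorem det_twoLevel [CommRing R] (hpq : p ≠ q) (B : Matrix (Fin 2) (Fin 2) R) :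
    (twoLevel hpq B).det = B.det := by
  rw [twoLevel, det_reindex_self, det_fromBlocks_zero₂₁, det_one, mul_one]

theorem twoLevel_mulVec_left [NonAssocSemiring R] (hpq : p ≠ q) (B : Matrix (Fin 2) (Fin 2) R)
    (x : ι → R) : (twoLevel hpq B *ᵥ x) p = (B *ᵥ ![x p, x q]) 0 := by
  simp [twoLevel, reindex_apply, submatrix_mulVec_equiv, fromBlocks_mulVec]
  congr
  ext i
  fin_cases i <;> rfl

theorem twoLevel_mulVec_right [NonAssocSemiring R] (hpq : p ≠ q) (B : Matrix (Fin 2) (Fin 2) R)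
    (x : ι → R) : (twoLevel hpq B *ᵥ x) q = (B *ᵥ ![x p, x q]) 1 := by
  simp [twoLevel, reindex_apply, submatrix_mulVec_equiv, fromBlocks_mulVec]
  congr
  ext i
  fin_cases i <;> rfl

end TwoLevel

namespace IsTwoLevelOn

variable {ι R : Type*} [Fintype ι] [DecidableEq ι] [NonAssocSemiring R] {A : Matrix ι ι R}
  {p q : ι}

theorem mulVec_apply_of_ne (h : IsTwoLevelOn A p q) {i : ι} (hp : i ≠ p) (hq : i ≠ q)
    (x : ι → R) : (A *ᵥ x) i = x i := by
  simp [mulVec, dotProduct, h i _ (.inl ⟨hp, hq⟩)]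

theorem mulVec_single_of_ne (h : IsTwoLevelOn A p q) {j : ι} (hp : j ≠ p) (hq : j ≠ q) :
    A *ᵥ Pi.single j 1 = Pi.single j 1 := by
  ext i
  rw [mulVec_single_one, col_apply, h i j (.inr ⟨hp, hq⟩), Pi.single_apply]

omit [Fintype ι] in
theorem reindex {κ : Type*} [DecidableEq κ] (h : IsTwoLevelOn A p q) (e : ι ≃ κ) :
    IsTwoLevelOn (reindex e e A) (e p) (e q) := by
  intro i j hij
  simp only [← e.symm_apply_eq.not] at hij
  simp [h _ _ hij]

end IsTwoLevelOn

section Givens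

variable {R : Type*} [CommRing R] [StarRing R]

-- For a unit vector `c` parallel to `(a, b)`, `star (givens z c₁ c₂)` sends `(a, b)` to
-- `(0, ‖(a, b)‖)`, while `z`, the determinant, stays free.
def givens (z c₁ c₂ : R) : Matrix (Fin 2) (Fin 2) R :=
  !![z * star c₂, c₁; -(z * star c₁), c₂]

variable {z c₁ c₂ : R}

theorem givens_mem_unitaryGroup (hz : star z * z = 1)
    (hc : star c₁ * c₁ + star c₂ * c₂ = 1) : givens z c₁ c₂ ∈ unitaryGroup (Fin 2) R := by
  rw [mem_unitaryGroup_iff]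
  ext i j
  fin_cases i <;> fin_cases j <;> simp [givens, mul_apply, Fin.sum_univ_two]
  · linear_combination (star c₂ * c₂) * hz + hc
  · linear_combination -(c₁ * star c₂) * hz
  · linear_combination -(star c₁ * c₂) * hz
  · linear_combination (star c₁ * c₁) * hz + hc

theorem det_givens (hc : star c₁ * c₁ + star c₂ * c₂ = 1) : (givens z c₁ c₂).det = z := by
  rw [givens, det_fin_two_of]
  linear_combination z * hc

theorem star_givens_mulVec (a b : R) :
    star (givens z c₁ c₂) *ᵥ ![a, b] =
      ![star z * (c₂ * a - c₁ * b), star c₁ * a + star c₂ * b] := by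
  ext i
  fin_cases i <;> simp [givens, mulVec, dotProduct, Fin.sum_univ_two]
  ring

end Givens

theorem exists_unit_pair_parallel (a b : ℂ) : ∃ c₁ c₂ : ℂ,
    star c₁ * c₁ + star c₂ * c₂ = 1 ∧ c₂ * a = c₁ * b ∧ 0 ≤ star c₁ * a + star c₂ * b := by
  by_cases hab : a = 0 ∧ b = 0
  · exact ⟨0, 1, by simp, by simp [hab.1], by simp [hab.2]⟩
  set r : ℝ := ‖a‖ ^ 2 + ‖b‖ ^ 2
  have hr : 0 < r := by
    rcases not_and_or.mp hab with h | h
    · have := norm_pos_iff.mpr h; positivity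
    · have := norm_pos_iff.mpr h; positivity
  have hs : (√r : ℂ) ≠ 0 := by exact_mod_cast (Real.sqrt_pos.mpr hr).ne'
  have hinner : star (a / √r) * a + star (b / √r) * b = √r := by
    have hss : (√r : ℂ) ^ 2 = r := by exact_mod_cast Real.sq_sqrt hr.le
    simp only [star_div₀, Complex.star_def, Complex.conj_ofReal]
    field_simp
    rw [Complex.conj_mul', Complex.conj_mul', hss]
    push_cast [r]
    ring
  refine ⟨a / √r, b / √r, ?_, by ring, ?_⟩
  · calc star (a / √r) * (a / √r) + star (b / √r) * (b / √r)
        = (star (a / √r) * a + star (b / √r) * b) / √r := by ring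
      _ = 1 := by rw [hinner, div_self hs]
  · rw [hinner]
    exact Complex.zero_le_real.mpr (Real.sqrt_nonneg r)

theorem exists_unitary_det_star_mulVec (a b z : ℂ) (hz : ‖z‖ = 1) :
    ∃ B ∈ unitaryGroup (Fin 2) ℂ,
      B.det = z ∧ (star B *ᵥ ![a, b]) 0 = 0 ∧ 0 ≤ (star B *ᵥ ![a, b]) 1 := by
  obtain ⟨c₁, c₂, hc, horth, hpos⟩ := exists_unit_pair_parallel a b
  have hz' : star z * z = 1 := by
    rw [Complex.star_def, Complex.conj_mul', hz]
    norm_num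
  refine ⟨givens z c₁ c₂, givens_mem_unitaryGroup hz' hc, det_givens hc, ?_, ?_⟩ <;>
    rw [star_givens_mulVec]
  · simp [horth]
  · simpa using hpos

section Adjacent

variable {N : ℕ}

def IsAdjTwoLevelUnitary (A : Matrix (Fin N) (Fin N) ℂ) (z : ℂ) : Prop :=
  A ∈ unitaryGroup (Fin N) ℂ ∧
    (∃ (k : ℕ) (hk : k + 1 < N), IsTwoLevelOn A ⟨k, by omega⟩ ⟨k + 1, hk⟩) ∧ A.det = z

theorem IsAdjTwoLevelUnitary.list_prod {L : List (Matrix (Fin N) (Fin N) ℂ)} {d : List ℂ}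
    (h : List.Forall₂ IsAdjTwoLevelUnitary L d) :
    L.prod ∈ unitaryGroup (Fin N) ℂ ∧ L.prod.det = d.prod := by
  induction h with
  | nil => simp
  | cons hA _ ih =>
    exact ⟨mul_mem hA.1 ih.1, by rw [List.prod_cons, det_mul, hA.2.2, ih.2, List.prod_cons]⟩

-- The factors act on `(s, s+1), (s+1, s+2), …` in turn, each moving the accumulated mass of `v`
-- one index further up.
theorem exists_adjTwoLevel_sweep (d : List ℂ) (hd : ∀ z ∈ d, ‖z‖ = 1) (s : ℕ)
    (hs : s + d.length < N) (v : Fin N → ℂ) (hv : ∀ i : Fin N, i < s → v i = 0) :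
    ∃ L : List (Matrix (Fin N) (Fin N) ℂ), List.Forall₂ IsAdjTwoLevelUnitary L d ∧
      (∀ j : Fin N, s + d.length < j → star L.prod *ᵥ Pi.single j 1 = Pi.single j 1) ∧
      (∀ i : Fin N, i < s + d.length → (star L.prod *ᵥ v) i = 0) ∧
      (d ≠ [] → 0 ≤ (star L.prod *ᵥ v) ⟨s + d.length, hs⟩) := by
  induction d generalizing s v with
  | nil => exact ⟨[], .nil, fun j _ => by simp only [List.prod_nil, star_one, one_mulVec],
    by simpa using hv, by simp⟩
  | cons z d ih =>
    simp only [List.length_cons] at hs ⊢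
    set p : Fin N := ⟨s, by omega⟩
    set q : Fin N := ⟨s + 1, by omega⟩
    have hpq : p ≠ q := by simp [p, q, Fin.ext_iff]
    obtain ⟨B, hBU, hBdet, hBp, hBq⟩ :=
      exists_unitary_det_star_mulVec (v p) (v q) z (hd z List.mem_cons_self)
    set T := twoLevel hpq B
    have hT : IsTwoLevelOn (star T) p q := star_twoLevel hpq B ▸ isTwoLevelOn_twoLevel hpq _
    have hTp : (star T *ᵥ v) p = 0 := by rwa [star_twoLevel, twoLevel_mulVec_left]
    have hTq : 0 ≤ (star T *ᵥ v) q := by rwa [star_twoLevel, twoLevel_mulVec_right]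
    obtain ⟨L, hL, hfix, hzero, hpos⟩ := ih (fun z hz => hd z (List.mem_cons_of_mem _ hz))
      (s + 1) (by omega) (star T *ᵥ v) fun i hi => by
        rcases Nat.lt_succ_iff_lt_or_eq.mp hi with hi | hi
        · rw [hT.mulVec_apply_of_ne (Fin.ne_of_lt hi) (by simp [q, Fin.ext_iff]; omega), hv i hi]
        · rwa [show i = p from Fin.ext hi]
    have hprod : ∀ x, star (T :: L).prod *ᵥ x = star L.prod *ᵥ (star T *ᵥ x) := fun x => by
      rw [List.prod_cons, star_mul, mulVec_mulVec]
    refine ⟨T :: L, .cons ⟨twoLevel_mem_unitaryGroup hpq hBU, ⟨s, by omega,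
      isTwoLevelOn_twoLevel hpq B⟩, by rw [det_twoLevel, hBdet]⟩ hL, fun j hj => ?_,
      fun i hi => ?_, fun _ => ?_⟩
    · rw [hprod, hT.mulVec_single_of_ne (by simp [p, Fin.ext_iff]; omega)
        (by simp [q, Fin.ext_iff]; omega), hfix j (by omega)]
    · rw [hprod]
      exact hzero i (by omega)
    · rw [hprod]
      rcases eq_or_ne d [] with rfl | hd'
      · obtain rfl := List.forall₂_nil_right_iff.mp hL
        simpa using hTq
      · convert hpos hd' using 2
        simp only [Fin.mk.injEq]
        omega

theorem exists_adjTwoLevel_star_prod_mul_fix {t : ℕ} (ht : 1 ≤ t) (htN : t < N)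
    {U : Matrix (Fin N) (Fin N) ℂ} (hU : U ∈ unitaryGroup (Fin N) ℂ)
    (hfix : ∀ j : Fin N, t < j → U *ᵥ Pi.single j 1 = Pi.single j 1)
    (d : List ℂ) (hd : ∀ z ∈ d, ‖z‖ = 1) (hlen : d.length = t) :
    ∃ L : List (Matrix (Fin N) (Fin N) ℂ), List.Forall₂ IsAdjTwoLevelUnitary L d ∧
      ∀ j : Fin N, t ≤ j → (star L.prod * U) *ᵥ Pi.single j 1 = Pi.single j 1 := by
  set c : Fin N := ⟨t, htN⟩
  obtain ⟨L, hL, hLfix, hzero, hpos⟩ :=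
    exists_adjTwoLevel_sweep d hd 0 (by omega) (U *ᵥ Pi.single c 1) (by simp)
  simp only [zero_add, hlen] at hLfix hzero hpos
  set W := star L.prod * U
  have hWU : W ∈ unitaryGroup (Fin N) ℂ :=
    mul_mem (Unitary.star_mem (IsAdjTwoLevelUnitary.list_prod hL).1) hU
  have hWfix : ∀ j : Fin N, t < j → W *ᵥ Pi.single j 1 = Pi.single j 1 := fun j hj => by
    rw [← mulVec_mulVec, hfix j hj, hLfix j hj]
  have hWcol : ∀ i, W i c = (star L.prod *ᵥ (U *ᵥ Pi.single c 1)) i := fun i => by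
    rw [mulVec_mulVec, mulVec_single_one, col_apply]
  refine ⟨L, hL, fun j hj => ?_⟩
  rcases hj.lt_or_eq with hj | hj
  · exact hWfix j hj
  obtain rfl : c = j := Fin.ext hj
  refine mulVec_single_eq_of_nonneg hWU (fun i hi => ?_) ?_
  · rcases lt_or_gt_of_ne hi with hi | hi
    · rw [hWcol]
      exact hzero i hi
    · exact apply_eq_zero_of_mulVec_single hWU (hWfix i hi) hi.ne
  · rw [hWcol]
    exact hpos (by rintro rfl; simp at hlen; omega)

theorem exists_list_prod_adjTwoLevel {t : ℕ} (ht : 1 ≤ t) (htN : t ≤ N)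
    {U : Matrix (Fin N) (Fin N) ℂ} (hU : U ∈ unitaryGroup (Fin N) ℂ)
    (hfix : ∀ j : Fin N, t ≤ j → U *ᵥ Pi.single j 1 = Pi.single j 1)
    (μ : List ℂ) (hμ : ∀ z ∈ μ, ‖z‖ = 1) (hlen : μ.length = t.choose 2) (hdet : μ.prod = U.det) :
    ∃ L : List (Matrix (Fin N) (Fin N) ℂ), L.prod = U ∧ List.Forall₂ IsAdjTwoLevelUnitary L μ := by
  induction t, ht using Nat.le_induction generalizing U μ with
  | base =>
    obtain rfl : μ = [] := List.length_eq_zero_iff.mp hlen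
    refine ⟨[], (eq_one_of_mulVec_single_of_det_eq_one hU ⟨0, htN⟩ (fun j hj => hfix j ?_)
      (by simpa using hdet.symm)).symm, .nil⟩
    exact Nat.one_le_iff_ne_zero.mpr fun h => hj (Fin.ext h)
  | succ t ht ih =>
    rw [Nat.choose_succ_succ', Nat.choose_one_right] at hlen
    obtain ⟨L₁, hL₁, hWfix⟩ := exists_adjTwoLevel_star_prod_mul_fix ht htN hU
      (fun j hj => hfix j hj) (μ.take t) (fun z hz => hμ z (List.mem_of_mem_take hz))
      (by simp [hlen])
    obtain ⟨hL₁U, hL₁det⟩ := IsAdjTwoLevelUnitary.list_prod hL₁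
    set W := star L₁.prod * U
    have hUW : L₁.prod * W = U := by
      rw [← mul_assoc, mem_unitaryGroup_iff.mp hL₁U, one_mul]
    have hWdet : (μ.drop t).prod = W.det := by
      have hne : (μ.take t).prod ≠ 0 :=
        List.prod_ne_zero fun h0 => by simpa using hμ 0 (List.mem_of_mem_take h0)
      refine mul_left_cancel₀ hne ?_
      rw [List.prod_take_mul_prod_drop, hdet, ← hUW, det_mul, hL₁det]
    obtain ⟨L₂, hL₂W, hL₂⟩ := ih (by omega) (mul_mem (Unitary.star_mem hL₁U) hU) hWfix
      (μ.drop t) (fun z hz => hμ z (List.mem_of_mem_drop hz)) (by simp [hlen]) hWdet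
    refine ⟨L₁ ++ L₂, by rw [List.prod_append, hL₂W, hUW], ?_⟩
    rw [← List.take_append_drop t μ]
    exact List.rel_append hL₁ hL₂

end Adjacent

theorem unitary_eq_prod_adjTwoLevel {κ : Type*} [Fintype κ] [DecidableEq κ] {N : ℕ}
    (hN : 1 ≤ N) (e : Fin N ≃ κ) {U : Matrix κ κ ℂ} (hU : U ∈ unitaryGroup κ ℂ)
    (μ : Fin (N * (N - 1) / 2) → ℂ) (hμ : ∀ i, ‖μ i‖ = 1) (hprod : ∏ i, μ i = U.det) :
    ∃ A : Fin (N * (N - 1) / 2) → Matrix κ κ ℂ,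
      U = (List.ofFn A).prod ∧
      ∀ i, A i ∈ unitaryGroup κ ℂ ∧
        (∃ (k : ℕ) (hk : k + 1 < N), IsTwoLevelOn (A i) (e ⟨k, by omega⟩) (e ⟨k + 1, hk⟩)) ∧
        (A i).det = μ i := by
  obtain ⟨L, hLU, hL⟩ := exists_list_prod_adjTwoLevel hN le_rfl
    (reindex_mem_unitaryGroup e.symm hU) (fun j hj => absurd j.isLt (by omega)) (List.ofFn μ)
    (by simpa [List.forall_mem_ofFn_iff] using hμ) (by simp [Nat.choose_two_right])
    (by rw [List.prod_ofFn, hprod, det_reindex_self])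
  have hlen : L.length = N * (N - 1) / 2 := by rw [hL.length_eq, List.length_ofFn]
  refine ⟨fun i => reindex e e (L[i.cast hlen.symm]), ?_, fun i => ?_⟩
  · have hofFn : List.ofFn (fun i : Fin (N * (N - 1) / 2) => reindex e e (L[i.cast hlen.symm]))
        = L.map (reindexAlgEquiv ℂ ℂ e) := by
      apply List.ext_getElem <;> simp [hlen]
    rw [hofFn, ← map_list_prod, hLU]
    simp
  · obtain ⟨hAU, ⟨k, hk, hA⟩, hAdet⟩ := hL.get (i.cast hlen.symm).isLt (by simp)
    exact ⟨reindex_mem_unitaryGroup e hAU, ⟨k, hk, hA.reindex e⟩,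
      by simpa [det_reindex_self] using hAdet⟩

/-- Every `2^n × 2^n` unitary matrix is a product of `m = N(N-1)/2` (`N = 2^n`)
`Gₙ`-unitary matrices with any prescribed determinants of modulus 1 whose
product equals `det U`. -/
theorem unitary_eq_prod_gray_unitary_prescribed_det (n : ℕ)
    (X : Fin (2 ^ n) → (Fin n → Bool)) (hbij : Function.Bijective X)
    (U : Matrix (Fin n → Bool) (Fin n → Bool) ℂ)
    (hU : U ∈ Matrix.unitaryGroup (Fin n → Bool) ℂ)
    (μ : Fin (2 ^ n * (2 ^ n - 1) / 2) → ℂ) (hμ : ∀ i, ‖μ i‖ = 1)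
    (hprod : ∏ i, μ i = U.det) :
    ∃ A : Fin (2 ^ n * (2 ^ n - 1) / 2) → Matrix (Fin n → Bool) (Fin n → Bool) ℂ,
      U = (List.ofFn A).prod ∧
      ∀ i, A i ∈ Matrix.unitaryGroup (Fin n → Bool) ℂ ∧
        (∃ (k : ℕ) (hk : k + 1 < 2 ^ n),
          IsTwoLevelOn (A i) (X ⟨k, by omega⟩) (X ⟨k + 1, hk⟩)) ∧
        (A i).det = μ i :=
  unitary_eq_prod_adjTwoLevel Nat.one_le_two_pow (Equiv.ofBijective X hbij) hU μ hμ hprod
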